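/- If (p_1, p_2) and (p_3, p_4) are non-periodic palindromic couples and α_1, α_2 ≥ 2 are integers such that (p_1 p_2)^{α_1} p_1 = (p_3 p_4)^{α_2} p_3, then (p_1, p_2) = (p_3, p_4). -/
import Mathlib


namespace PalLen

variable {α : Type*}

/-- `u` is a palindrome (the empty word counts; "nonempty palindrome" adds `u ≠ []`). -/
def IsPal (u : List α) : Prop := u.reverse = u

/-- `ξ` is a period of the word `t` (0-indexed: `t[i] = t[i+ξ]` whenever both indices are
valid); in particular every `ξ ≥ |t|` is a period. -/
def IsPeriod (t : List α) (ξ : ℕ) : Prop :=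
  1 ≤ ξ ∧ ∀ i : ℕ, i + ξ < t.length → t[i]? = t[i + ξ]?

/-- the minimal period of `t` -/
noncomputable def mper (t : List α) : ℕ := sInf {ξ | IsPeriod t ξ}

/-- `order(t) = |t| / mper(t) ∈ ℚ` -/
noncomputable def wOrder (t : List α) : ℚ := (t.length : ℚ) / (mper t : ℚ)

/-- a non-periodic palindromic couple -/
def PalCouple (p₁ p₂ : List α) : Prop :=
  IsPal p₁ ∧ IsPal p₂ ∧ p₂ ≠ [] ∧ wOrder (p₁ ++ p₂ ++ p₁) < 2

/-- `wpow w n = w^n` -/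
def wpow (w : List α) : ℕ → List α
  | 0 => []
  | n + 1 => w ++ wpow w n

/-- `u` is a factor of the infinite word `w^∞` -/
def FactorOfPow (u w : List α) : Prop := ∃ n : ℕ, u <:+: wpow w n

/-- `u` is a prefix of the infinite word `w^∞` -/
def PrefixOfPow (u w : List α) : Prop := ∃ n : ℕ, u <+: wpow w n

/-- the palindromic length of a word -/
noncomputable def PL (u : List α) : ℕ :=
  sInf {k | ∃ ps : List (List α), ps.length = k ∧ (∀ p ∈ ps, p ≠ [] ∧ IsPal p) ∧
    ps.flatten = u}

/-- `u` is a (finite) factor of the infinite word `x` -/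
def FactorOfInf (u : List α) (x : ℕ → α) : Prop :=
  ∃ i : ℕ, u = (List.range u.length).map fun j => x (i + j)

/-- `u` is a prefix of the infinite word `x` -/
def PrefixOfInf (u : List α) (x : ℕ → α) : Prop :=
  u = (List.range u.length).map fun j => x j

/-- `x = u v v v ⋯` for some finite words `u, v` with `v` nonempty -/
def UltimatelyPeriodic (x : ℕ → α) : Prop :=
  ∃ u v : List α, v ≠ [] ∧ (∀ i : ℕ, i < u.length → u[i]? = some (x i)) ∧
    ∀ i : ℕ, v[i % v.length]? = some (x (u.length + i))

/-- padding of an infinite word over `Σ₀ = α`; the padding letter `b` is `none`,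
the letters of `Σ₀` are embedded via `some`.  (0-indexed: even positions carry `b`.) -/
def padInf (x : ℕ → α) : ℕ → Option α :=
  fun i => if i % 2 = 0 then none else some (x (i / 2))

/-- padding of a finite word: `pad(u₁u₂⋯uₙ) = u₁ b u₂ b ⋯ b uₙ` -/
def padF (u : List α) : List (Option α) := List.intersperse none (u.map some)

/-- the padded palindromic length: minimal `k` with `w = p₁ b p₂ b ⋯ b p_k`,
each `pᵢ` a nonempty palindrome -/
noncomputable def PPL (w : List (Option α)) : ℕ :=
  sInf {k | ∃ ps : List (List (Option α)), ps.length = k ∧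
    (∀ p ∈ ps, p ≠ [] ∧ IsPal p) ∧ (List.intersperse [none] ps).flatten = w}

/-- the set of nonempty non-periodic palindromic prefixes of `t` -/
def NPP (t : List α) : Set (List α) :=
  {p | p ≠ [] ∧ p <+: t ∧ IsPal p ∧ wOrder p < 2}

/-- the set of nonempty non-periodic palindromic prefixes of an infinite word -/
def NPPInf (x : ℕ → α) : Set (List α) :=
  {p | p ≠ [] ∧ PrefixOfInf p x ∧ IsPal p ∧ wOrder p < 2}

/-- a word is ordinary if no factor has more nonempty non-periodic palindromic prefixes -/
def Ordinary (t : List α) : Prop := ∀ u : List α, u <:+: t → (NPP u).ncard ≤ (NPP t).ncard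

/-- `seg z i j = z[i,j]` (1-indexed, inclusive) -/
def seg (z : List α) (i j : ℕ) : List α := (z.drop (i - 1)).take (j - i + 1)

/-- `Spread(D, ξ)` restricted to ℕ -/
def Spread (D : Set ℕ) (ξ : ℕ) : Set ℕ :=
  {n | ∃ i ∈ D, ∃ a : ℤ, (n : ℤ) = (i : ℤ) + a * (ξ : ℤ)}

/-- `Close(D) = [min D, max D]` for nonempty `D`, `∅` otherwise -/
def Close (D : Set ℕ) : Set ℕ := {n | D.Nonempty ∧ sInf D ≤ n ∧ n ≤ sSup D}

open Classical in
/-- the diameter of a set -/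
noncomputable def diam (D : Set ℕ) : ℕ :=
  if D.Nonempty then sSup D - sInf D + 1 else 0

/-- `D'` is a ξ-cut of `D` -/
def IsCut (D : Set ℕ) (ξ : ℕ) (D' : Set ℕ) : Prop :=
  D' ⊆ D ∧ (D' = ∅ ∨ diam D' ≤ ξ)

variable (z : List α)

/-- `h = |NPP(z)|` -/
noncomputable def hNPP : ℕ := (NPP z).ncard

/-- `θ(m) = (100h)^m` -/
noncomputable def theta (m : ℕ) : ℕ := (100 * hNPP z) ^ m

/-- the ambient set `W` of candidate nested periodic structures -/
def NPSW : Set (Set ℕ × ℕ) :=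
  {Dξ | Dξ.1.Nonempty ∧ Dξ.1 ⊆ Set.Icc 1 z.length ∧
    Dξ.1 = Spread Dξ.1 Dξ.2 ∩ Close Dξ.1 ∧
    IsPeriod (seg z (sInf Dξ.1) (sSup Dξ.1)) Dξ.2}

/-- nested periodic structures of degree `m` -/
def NestPer : ℕ → Set (Set ℕ × ℕ)
  | 0 => {Dξ ∈ NPSW z | Dξ.1.ncard = 1}
  | m + 1 => {Dξ ∈ NPSW z | ∀ D' : Set ℕ, IsCut Dξ.1 Dξ.2 D' →
      ∃ M : Set (Set ℕ × ℕ), M ⊆ NestPer m ∧ M.Finite ∧ M.ncard ≤ theta z (m + 1) ∧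
        D' ⊆ (⋃ C ∈ M, C.1) ∧ (⋃ C ∈ M, C.1) ⊆ Close D'}

/-- `ω(m, D)`: the minimal cardinality of an NPS cover of `D` of degree `m` -/
noncomputable def omegaMin (m : ℕ) (D : Set ℕ) : ℕ :=
  sInf {k | ∃ M : Set (Set ℕ × ℕ), M ⊆ NestPer z m ∧ M.Finite ∧ M.ncard = k ∧
    D ⊆ (⋃ C ∈ M, C.1) ∧ (⋃ C ∈ M, C.1) ⊆ Close D}

/-- `FirmPalPrefix(n)` -/
def FirmPalPrefix (n : ℕ) : Set (List α) :=
  {p₀ ∈ NPP (z.drop (n - 1)) | ∀ p₁ p₂ : List α, PalCouple p₁ p₂ → p₁ ++ p₂ ++ p₁ = p₀ →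
    ¬ (wpow (p₁ ++ p₂) 2 ++ p₁ <+: z.drop (n - 1))}

/-- `Γ(n)` -/
def Gamma (n : ℕ) : Set (List α × List α) :=
  {pq | PalCouple pq.1 pq.2 ∧ pq.1 ++ pq.2 ++ pq.1 <+: z.drop (n - 1) ∧
    (pq.1 ++ pq.2 ++ pq.1 ∈ FirmPalPrefix z n → pq.1 = [])}

/-- palindromic extension tuples `(n, p₁, p₂, α)` of the position `n` -/
def PalExt (n : ℕ) : Set (ℕ × List α × List α × ℕ) :=
  {T | T.1 = n ∧ PalCouple T.2.1 T.2.2.1 ∧ 1 ≤ T.2.2.2 ∧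
    ((wpow (T.2.1 ++ T.2.2.1) T.2.2.2 ++ T.2.1 <+: z.drop (n - 1) ∧
        T.2.1 ++ T.2.2.1 ++ T.2.1 ∉ FirmPalPrefix z n) ∨
      (T.2.1 = [] ∧ T.2.2.2 = 1 ∧ T.2.2.1 ∈ FirmPalPrefix z n))}

/-- palindromic extension tuples of a set of positions -/
def PalExtSet (D : Set ℕ) : Set (ℕ × List α × List α × ℕ) := ⋃ n ∈ D, PalExt z n

/-- `σ(n, p₁, p₂, α) = n − 1 + |(p₁p₂)^α p₁|` -/
def sigmaPE (T : ℕ × List α × List α × ℕ) : ℕ :=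
  T.1 - 1 + (wpow (T.2.1 ++ T.2.2.1) T.2.2.2 ++ T.2.1).length

/-- covering palindromes of the position `n` -/
def CovPalAll (n : ℕ) : Set (ℕ × ℕ) :=
  {q | 1 ≤ q.1 ∧ q.1 ≤ n ∧ n ≤ q.2 ∧ q.2 ≤ z.length ∧ IsPal (seg z q.1 q.2)}

def CovPalAllLeft (n : ℕ) : Set (ℕ × ℕ) :=
  {q ∈ CovPalAll z n | 2 * n ≤ q.1 + q.2}

/-- edge covering palindromes of the position `n` -/
def CovPalEdge (n : ℕ) : Set (ℕ × ℕ) :=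
  {q ∈ CovPalAll z n | 1 < q.1 → q.2 < z.length → ¬ IsPal (seg z (q.1 - 1) (q.2 + 1))}

def CovPalEdgeLeft (n : ℕ) : Set (ℕ × ℕ) := CovPalAllLeft z n ∩ CovPalEdge z n

/-- `Mirror(n₁, n₂, j) = n₁ + n₂ − j` -/
def Mirror (n₁ n₂ j : ℕ) : ℕ := n₁ + n₂ - j

/-- the characterization of `toPalCouple(n₁, n₂) = (p₁, p₂)` -/
def IsToPalCouple (n₁ n₂ : ℕ) (p₁ p₂ : List α) : Prop :=
  PalCouple p₁ p₂ ∧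
  ((seg z n₁ n₂ ∈ FirmPalPrefix z n₁ ∧ p₁ = [] ∧ p₂ = seg z n₁ n₂) ∨
    (seg z n₁ n₂ ∉ FirmPalPrefix z n₁ ∧ wpow (p₁ ++ p₂) 2 ++ p₁ <+: z.drop (n₁ - 1) ∧
      ∃ a : ℕ, 1 ≤ a ∧ seg z n₁ n₂ = wpow (p₁ ++ p₂) a ++ p₁))

/-- compound covering palindromes of `n` -/
def CovPalCmd (n : ℕ) : Set (ℕ × ℕ) :=
  {q ∈ CovPalEdgeLeft z n | ∀ p₁ p₂ : List α, IsToPalCouple z n (Mirror q.1 q.2 n) p₁ p₂ →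
    ¬ FactorOfPow (seg z q.1 q.2) (p₁ ++ p₂)}

/-- `(ν₁, ν₂, ξ)` is a run of `z` -/
def IsRun (ν₁ ν₂ ξ : ℕ) : Prop :=
  1 ≤ ν₁ ∧ ν₁ ≤ ν₂ ∧ ν₂ ≤ z.length ∧ IsPeriod (seg z ν₁ ν₂) ξ ∧
  ξ ≤ ν₂ - ν₁ + 1 ∧
  (ν₂ < z.length → ¬ IsPeriod (seg z ν₁ (ν₂ + 1)) ξ) ∧
  (1 < ν₁ → ¬ IsPeriod (seg z (ν₁ - 1) ν₂) ξ) ∧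
  ∃ p₁ p₂ : List α, PalCouple p₁ p₂ ∧ (p₁ ++ p₂).length = ξ ∧ p₁ ++ p₂ <+: seg z ν₁ ν₂

/-- the characterization of `pToRun(n₁, n₂) = r` -/
def IsPToRun (n₁ n₂ : ℕ) (r : ℕ × ℕ × ℕ) : Prop :=
  IsRun z r.1 r.2.1 r.2.2 ∧ r.1 ≤ n₁ ∧ n₂ ≤ r.2.1 ∧
  ∃ p₁ p₂ : List α, IsToPalCouple z n₁ n₂ p₁ p₂ ∧ r.2.2 = (p₁ ++ p₂).length

/-- `pToRun(X)` as a set of runs -/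
def pToRunImage (X : Set (ℕ × ℕ)) : Set (ℕ × ℕ × ℕ) :=
  {r | ∃ q ∈ X, IsPToRun z q.1 q.2 r}

/-- the collection `UC` -/
def UC : Set (Set ℕ) :=
  {S | S ⊆ Set.Icc 1 z.length ∧ ∀ μ₁ μ₂ ξ : ℕ, 1 ≤ μ₁ → μ₁ ≤ μ₂ → μ₂ ≤ z.length →
    IsPeriod (seg z μ₁ μ₂) ξ →
    ∃ E : Set ℕ, E ⊆ Set.Icc μ₁ μ₂ ∧ E.Finite ∧ E.ncard ≤ 8 ∧
      S ∩ (⋃ δ ∈ E, Set.Icc δ (δ + ξ - 1)) = S ∩ Set.Icc μ₁ μ₂}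

end PalLen

namespace PalLen

variable {α : Type*}

/-- the sets `B_j` of base positions, built from the chain `zs 1, …, zs h` of
non-periodic palindromic prefixes and the middle palindromes `zh i` -/
def BaseB (zs zh : ℕ → List α) : ℕ → Set (ℕ × ℕ)
  | 0 => ∅
  | 1 => {(1, 1)}
  | j + 2 => BaseB zs zh (j + 1) ∪
      ((fun q : ℕ × ℕ => (q.1, q.2 + (zs (j + 1)).length + (zh (j + 1)).length)) ''
        BaseB zs zh (j + 1)) ∪
      {(j + 2, 1)}

end PalLen


namespace PalLen

variable {α : Type*}

lemma wpow_succ' (w : List α) (n : ℕ) : wpow w (n + 1) = wpow w n ++ w := by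
  induction n with
  | zero => simp [wpow]
  | succ n ih =>
    show w ++ wpow w (n + 1) = (w ++ wpow w n) ++ w
    rw [ih, List.append_assoc]

lemma length_wpow (w : List α) (n : ℕ) : (wpow w n).length = n * w.length := by
  induction n with
  | zero => simp [wpow]
  | succ n ih => simp [wpow, ih]; ring

lemma prefix_wpow (w : List α) {n : ℕ} (hn : 1 ≤ n) : w <+: wpow w n := by
  rcases n with _ | m
  · omega
  · exact List.prefix_append w (wpow w m)

lemma isPeriod_of_ge (t : List α) {ξ : ℕ} (h1 : 1 ≤ ξ) (h2 : t.length ≤ ξ) :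
    IsPeriod t ξ := ⟨h1, fun i hi => by omega⟩

lemma isPeriod_nonempty (t : List α) : {ξ | IsPeriod t ξ}.Nonempty :=
  ⟨t.length + 1, isPeriod_of_ge t (by omega) (by omega)⟩

lemma isPeriod_mper (t : List α) : IsPeriod t (mper t) :=
  Nat.sInf_mem (isPeriod_nonempty t)

lemma mper_le {t : List α} {ξ : ℕ} (h : IsPeriod t ξ) : mper t ≤ ξ :=
  Nat.sInf_le h

lemma one_le_mper (t : List α) : 1 ≤ mper t := (isPeriod_mper t).1

lemma IsPeriod.of_prefix {t u : List α} {ξ : ℕ} (h : IsPeriod t ξ) (hp : u <+: t) :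
    IsPeriod u ξ := by
  obtain ⟨r, rfl⟩ := hp
  refine ⟨h.1, fun i hi => ?_⟩
  have hlen : u.length ≤ (u ++ r).length := by simp
  have := h.2 i (by omega)
  rwa [List.getElem?_append_left (by omega), List.getElem?_append_left (by omega)] at this

lemma isPeriod_of_eq_append {t w s : List α} (ht : t = w ++ s) (hs : s <+: t)
    (hw : 1 ≤ w.length) : IsPeriod t w.length := by
  refine ⟨hw, fun i hi => ?_⟩
  have hilen : i < s.length := by
    have : t.length = w.length + s.length := by rw [ht]; simp
    omega
  obtain ⟨r, hr⟩ := hs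
  have h1 : t[i + w.length]? = s[i]? := by
    rw [ht, List.getElem?_append_right (by omega)]
    congr 1; omega
  have h2 : t[i]? = s[i]? := by
    rw [← hr, List.getElem?_append_left hilen]
  rw [h1, h2]

lemma isPeriod_sub {t : List α} {p q : ℕ} (hp : IsPeriod t p) (hq : IsPeriod t q)
    (hpq : p < q) (hlen : p + q ≤ t.length) : IsPeriod t (q - p) := by
  refine ⟨by omega, fun i hi => ?_⟩
  by_cases hc : i + q < t.length
  · have e1 := hq.2 i hc
    have e2 := hp.2 (i + (q - p)) (by omega)
    rw [e1, e2]; congr 1; omega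
  · have hip : p ≤ i := by omega
    have e1 := hp.2 (i - p) (by omega)
    have e2 := hq.2 (i - p) (by omega)
    have h1 : i - p + p = i := by omega
    have h2 : i - p + q = i + (q - p) := by omega
    rw [h1] at e1; rw [h2] at e2
    rw [← e1, ← e2]

lemma fineWilf_aux (t : List α) :
    ∀ s p q : ℕ, p + q ≤ s → IsPeriod t p → IsPeriod t q → p + q ≤ t.length →
      IsPeriod t (Nat.gcd p q) := by
  intro s
  induction s with
  | zero => intro p q hs hp _ _; exact absurd hp.1 (by omega)
  | succ s ih =>
    intro p q hs hp hq hlen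
    have hp1 := hp.1
    have hq1 := hq.1
    rcases lt_trichotomy p q with h | h | h
    · have hqp := isPeriod_sub hp hq h hlen
      have hg := ih p (q - p) (by omega) hp hqp (by omega)
      rwa [Nat.gcd_sub_self_right (by omega)] at hg
    · subst h; rwa [Nat.gcd_self]
    · have hqp := isPeriod_sub hq hp h (by omega)
      have hg := ih q (p - q) (by omega) hq hqp (by omega)
      rw [Nat.gcd_sub_self_right (by omega)] at hg
      rwa [Nat.gcd_comm]

lemma fineWilf {t : List α} {p q : ℕ} (hp : IsPeriod t p) (hq : IsPeriod t q)
    (hlen : p + q ≤ t.length) : IsPeriod t (Nat.gcd p q) :=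
  fineWilf_aux t (p + q) p q le_rfl hp hq hlen

lemma length_lt_two_mul_mper {p₁ p₂ : List α} (h : PalCouple p₁ p₂) :
    (p₁ ++ p₂ ++ p₁).length < 2 * mper (p₁ ++ p₂ ++ p₁) := by
  have hlt := h.2.2.2
  have hm := one_le_mper (p₁ ++ p₂ ++ p₁)
  rw [wOrder, div_lt_iff₀ (by exact_mod_cast hm)] at hlt
  exact_mod_cast hlt

lemma no_small_period {p₃ p₄ t : List α} (h : PalCouple p₃ p₄)
    (hpre : p₃ ++ p₄ ++ p₃ <+: t) {g : ℕ} (hg : IsPeriod t g)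
    (h2g : 2 * g ≤ (p₃ ++ p₄).length) : False := by
  have hper := hg.of_prefix hpre
  have h1 := mper_le hper
  have h2 := length_lt_two_mul_mper h
  have h3 : (p₃ ++ p₄).length ≤ (p₃ ++ p₄ ++ p₃).length := by simp
  simp only [List.length_append] at h2 h2g ⊢
  omega

lemma prefix_pow_pal {p₁ p₂ : List α} {a : ℕ} (ha : 2 ≤ a) :
    p₁ ++ p₂ ++ p₁ <+: wpow (p₁ ++ p₂) a ++ p₁ := by
  obtain ⟨b, rfl⟩ : ∃ b, a = b + 2 := ⟨a - 2, by omega⟩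
  have h1 : p₁ <+: wpow (p₁ ++ p₂) (b + 1) ++ p₁ :=
    ((List.prefix_append p₁ p₂).trans
      (prefix_wpow (p₁ ++ p₂) (n := b + 1) (by omega))).trans (List.prefix_append _ _)
  have h2 : wpow (p₁ ++ p₂) (b + 2) ++ p₁ =
      (p₁ ++ p₂) ++ (wpow (p₁ ++ p₂) (b + 1) ++ p₁) := by
    show ((p₁ ++ p₂) ++ wpow (p₁ ++ p₂) (b + 1)) ++ p₁ = _
    rw [List.append_assoc]
  rw [h2]
  exact (List.prefix_append_right_inj (p₁ ++ p₂)).mpr h1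

lemma isPeriod_pow_pal {p₁ p₂ : List α} {a : ℕ} (ha : 1 ≤ a)
    (hq : 1 ≤ (p₁ ++ p₂).length) :
    IsPeriod (wpow (p₁ ++ p₂) a ++ p₁) (p₁ ++ p₂).length := by
  obtain ⟨b, rfl⟩ : ∃ b, a = b + 1 := ⟨a - 1, by omega⟩
  set w := p₁ ++ p₂ with hwdef
  have h2 : wpow w (b + 1) ++ p₁ = w ++ (wpow w b ++ p₁) := by
    show (w ++ wpow w b) ++ p₁ = _
    rw [List.append_assoc]
  have hpre : wpow w b ++ p₁ <+: wpow w (b + 1) ++ p₁ := by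
    have hw : wpow w b ++ p₁ <+: wpow w b ++ w :=
      (List.prefix_append_right_inj _).mpr (hwdef ▸ List.prefix_append p₁ p₂)
    have he : wpow w b ++ w <+: wpow w (b + 1) := by rw [wpow_succ']
    exact hw.trans (he.trans (List.prefix_append _ _))
  exact isPeriod_of_eq_append h2 hpre hq

lemma two_mul_dvd_lt {g n : ℕ} (hd : g ∣ n) (hlt : g < n) : 2 * g ≤ n := by
  obtain ⟨k, rfl⟩ := hd
  have hk : 2 ≤ k := by
    by_contra hk
    interval_cases k <;> omega
  calc 2 * g = g * 2 := by ring
    _ ≤ g * k := Nat.mul_le_mul_left g hk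

end PalLen

/-- If `(p₁, p₂)` and `(p₃, p₄)` are non-periodic palindromic couples and
`α₁, α₂ ≥ 2` are integers with `(p₁p₂)^{α₁} p₁ = (p₃p₄)^{α₂} p₃`, then the couples
coincide. -/
theorem statement6 {α : Type*} (p₁ p₂ p₃ p₄ : List α)
    (h₁ : PalLen.PalCouple p₁ p₂) (h₂ : PalLen.PalCouple p₃ p₄)
    (α₁ α₂ : ℕ) (hα₁ : 2 ≤ α₁) (hα₂ : 2 ≤ α₂)
    (heq : PalLen.wpow (p₁ ++ p₂) α₁ ++ p₁ = PalLen.wpow (p₃ ++ p₄) α₂ ++ p₃) :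
    p₁ = p₃ ∧ p₂ = p₄ := by
  classical
  set w := p₁ ++ p₂ with hw
  set w' := p₃ ++ p₄ with hw'
  have hq1 : 1 ≤ w.length := by
    have : 0 < p₂.length := List.length_pos_iff.mpr h₁.2.2.1
    rw [hw, List.length_append]; omega
  have hq1' : 1 ≤ w'.length := by
    have : 0 < p₄.length := List.length_pos_iff.mpr h₂.2.2.1
    rw [hw', List.length_append]; omega
  have hperq : PalLen.IsPeriod (PalLen.wpow w α₁ ++ p₁) w.length :=
    PalLen.isPeriod_pow_pal (by omega) hq1
  have hperq' : PalLen.IsPeriod (PalLen.wpow w α₁ ++ p₁) w'.length := by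
    rw [heq]; exact PalLen.isPeriod_pow_pal (by omega) hq1'
  have hlen1 : (PalLen.wpow w α₁ ++ p₁).length = α₁ * w.length + p₁.length := by
    simp [PalLen.length_wpow]
  have hlen2 : (PalLen.wpow w α₁ ++ p₁).length = α₂ * w'.length + p₃.length := by
    rw [heq]; simp [PalLen.length_wpow]
  have hl1 : p₁.length < w.length := by
    have : 0 < p₂.length := List.length_pos_iff.mpr h₁.2.2.1
    rw [hw, List.length_append]; omega
  have hl3 : p₃.length < w'.length := by
    have : 0 < p₄.length := List.length_pos_iff.mpr h₂.2.2.1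
    rw [hw', List.length_append]; omega
  have h2q : 2 * w.length ≤ α₁ * w.length := Nat.mul_le_mul_right w.length hα₁
  have h2q' : 2 * w'.length ≤ α₂ * w'.length := Nat.mul_le_mul_right w'.length hα₂
  have hlen : w.length + w'.length ≤ (PalLen.wpow w α₁ ++ p₁).length := by omega
  have hgcd : PalLen.IsPeriod (PalLen.wpow w α₁ ++ p₁) (Nat.gcd w.length w'.length) :=
    PalLen.fineWilf hperq hperq' hlen
  have hpre1 : p₁ ++ p₂ ++ p₁ <+: PalLen.wpow w α₁ ++ p₁ := PalLen.prefix_pow_pal hα₁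
  have hpre3 : p₃ ++ p₄ ++ p₃ <+: PalLen.wpow w α₁ ++ p₁ := by
    rw [heq]; exact PalLen.prefix_pow_pal hα₂
  have hqq : w.length = w'.length := by
    rcases lt_trichotomy w.length w'.length with h | h | h
    · exfalso
      have hd : Nat.gcd w.length w'.length ∣ w'.length := Nat.gcd_dvd_right _ _
      have hle : Nat.gcd w.length w'.length ≤ w.length :=
        Nat.le_of_dvd (by omega) (Nat.gcd_dvd_left _ _)
      have h2g : 2 * Nat.gcd w.length w'.length ≤ (p₃ ++ p₄).length := by
        rw [← hw']
        exact PalLen.two_mul_dvd_lt hd (by omega)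
      exact PalLen.no_small_period h₂ hpre3 hgcd h2g
    · exact h
    · exfalso
      have hd : Nat.gcd w.length w'.length ∣ w.length := Nat.gcd_dvd_left _ _
      have hle : Nat.gcd w.length w'.length ≤ w'.length :=
        Nat.le_of_dvd (by omega) (Nat.gcd_dvd_right _ _)
      have h2g : 2 * Nat.gcd w.length w'.length ≤ (p₁ ++ p₂).length := by
        rw [← hw]
        exact PalLen.two_mul_dvd_lt hd (by omega)
      exact PalLen.no_small_period h₁ hpre1 hgcd h2g
  have hl13 : p₁.length = p₃.length := by
    have h := hlen1.symm.trans hlen2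
    have e1 : (α₁ * w.length + p₁.length) % w.length = p₁.length := by
      rw [Nat.mul_comm, Nat.mul_add_mod, Nat.mod_eq_of_lt hl1]
    have e2 : (α₂ * w'.length + p₃.length) % w'.length = p₃.length := by
      rw [Nat.mul_comm, Nat.mul_add_mod, Nat.mod_eq_of_lt hl3]
    rw [← e1, h, hqq, e2]
  have hp1t : p₁ <+: PalLen.wpow w α₁ ++ p₁ :=
    ((hw ▸ List.prefix_append p₁ p₂).trans (PalLen.prefix_wpow w (by omega))).trans
      (List.prefix_append _ _)
  have hp3t : p₃ <+: PalLen.wpow w α₁ ++ p₁ := by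
    rw [heq]
    exact ((hw' ▸ List.prefix_append p₃ p₄).trans (PalLen.prefix_wpow w' (by omega))).trans
      (List.prefix_append _ _)
  have hp13 : p₁ = p₃ :=
    (List.prefix_of_prefix_length_le hp1t hp3t (by omega)).eq_of_length_le (by omega)
  have hwt : w <+: PalLen.wpow w α₁ ++ p₁ :=
    (PalLen.prefix_wpow w (by omega)).trans (List.prefix_append _ _)
  have hw't : w' <+: PalLen.wpow w α₁ ++ p₁ := by
    rw [heq]
    exact (PalLen.prefix_wpow w' (by omega)).trans (List.prefix_append _ _)
  have hww : w = w' :=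
    (List.prefix_of_prefix_length_le hwt hw't (by omega)).eq_of_length_le (by omega)
  refine ⟨hp13, ?_⟩
  rw [hw, hw', hp13] at hww
  exact List.append_cancel_left hww
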